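/- With the same A, B, I, J as above, it holds that I·A + J·B = (1 + ηβ + ηβγ)/(ηβγ). -/

import Mathlib

/-!
By Vieta, `γ (A + B) = (1 + ηβ)(1 + γ)` and `γ A B = 1 + ηβ`, so the two denominators multiply to
`(γA - 1)(1 - γB) = ηβ`. Over this common denominator the numerator of `I·A + J·B`, multiplied by `γ`,
is again symmetric in the roots and reduces by Vieta to `(A - B)(1 + ηβ + ηβγ)`.
-/

section Vieta

variable {R : Type*} [CommRing R] [IsDomain R] {a b c x y : R}

theorem mul_add_eq_neg_of_quadratic_roots (hx : a * x ^ 2 + b * x + c = 0)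
    (hy : a * y ^ 2 + b * y + c = 0) (hxy : x ≠ y) : a * (x + y) = -b := by
  have h : (x - y) * (a * (x + y) + b) = 0 := by linear_combination hx - hy
  exact eq_neg_of_add_eq_zero_left ((mul_eq_zero.mp h).resolve_left (sub_ne_zero.mpr hxy))

theorem mul_mul_eq_of_quadratic_roots (hx : a * x ^ 2 + b * x + c = 0)
    (hy : a * y ^ 2 + b * y + c = 0) (hxy : x ≠ y) : a * (x * y) = c := by
  linear_combination x * mul_add_eq_neg_of_quadratic_roots hx hy hxy - hx

end Vieta

section Roots

variable {γ p A B : ℝ}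
  (hA : γ * A ^ 2 - (1 + p) * (1 + γ) * A + (1 + p) = 0)
  (hB : γ * B ^ 2 - (1 + p) * (1 + γ) * B + (1 + p) = 0)
  (hAB : A ≠ B)
include hA hB hAB

theorem roots_sum_eq : γ * (A + B) = (1 + p) * (1 + γ) := by
  linear_combination mul_add_eq_neg_of_quadratic_roots (a := γ) (b := -((1 + p) * (1 + γ)))
    (c := 1 + p) (by linear_combination hA) (by linear_combination hB) hAB

theorem roots_prod_eq : γ * (A * B) = 1 + p :=
  mul_mul_eq_of_quadratic_roots (a := γ) (b := -((1 + p) * (1 + γ))) (by linear_combination hA)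
    (by linear_combination hB) hAB

theorem mul_sub_one_mul_one_sub_eq : (γ * A - 1) * (1 - γ * B) = p := by
  linear_combination roots_sum_eq hA hB hAB - γ * roots_prod_eq hA hB hAB

theorem weighted_roots_sum_eq (hγ : γ ≠ 0) (hp : p ≠ 0) :
    (γ * A + A - 1) / ((A - B) * (γ * A - 1)) * A
      + (γ * B + B - 1) / ((A - B) * (1 - γ * B)) * B
      = (1 + p + p * γ) / (p * γ) := by
  have hden := mul_sub_one_mul_one_sub_eq hA hB hAB
  have hA1 : γ * A - 1 ≠ 0 := left_ne_zero_of_mul (hden ▸ hp)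
  have hB1 : 1 - γ * B ≠ 0 := right_ne_zero_of_mul (hden ▸ hp)
  have hAB' : A - B ≠ 0 := sub_ne_zero.mpr hAB
  have hnum : γ * ((γ * A + A - 1) * A * (1 - γ * B) + (γ * B + B - 1) * B * (γ * A - 1))
      = (A - B) * (1 + p + p * γ) := by
    linear_combination (A - B) * (1 + γ) * roots_sum_eq hA hB hAB
      - (A - B) * γ * (1 + γ) * roots_prod_eq hA hB hAB
  have hIden := mul_ne_zero hAB' hA1
  have hJden := mul_ne_zero hAB' hB1
  rw [div_mul_eq_mul_div, div_mul_eq_mul_div, div_add_div _ _ hIden hJden,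
    div_eq_div_iff (mul_ne_zero hIden hJden) (mul_ne_zero hp hγ)]
  linear_combination (A - B) * p * hnum - (1 + p + p * γ) * (A - B) ^ 2 * hden

end Roots

theorem stmt_7_general (γ η β : ℝ) (hγ0 : 0 < γ) (hη : 0 < η) (hβ : 0 < β)
    (A B : ℝ)
    (hArt : γ * A ^ 2 - (1 + η * β) * (1 + γ) * A + (1 + η * β) = 0)
    (hBrt : γ * B ^ 2 - (1 + η * β) * (1 + γ) * B + (1 + η * β) = 0)
    (hAB : A > B)
    (I J : ℝ)
    (hI : I = (γ * A + A - 1) / ((A - B) * (γ * A - 1)))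
    (hJ : J = (γ * B + B - 1) / ((A - B) * (1 - γ * B))) :
    I * A + J * B = (1 + η * β + η * β * γ) / (η * β * γ) := by
  subst hI hJ
  exact weighted_roots_sum_eq hArt hBrt hAB.ne' hγ0.ne' (mul_pos hη hβ).ne'

/-- `I·A + J·B = (1 + ηβ + ηβγ)/(ηβγ)`. -/
theorem stmt_7 (γ η β : ℝ) (hγ0 : 0 < γ) (hγ1 : γ < 1) (hη : 0 < η) (hβ : 0 < β)
    (A B : ℝ)
    (hArt : γ * A ^ 2 - (1 + η * β) * (1 + γ) * A + (1 + η * β) = 0)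
    (hBrt : γ * B ^ 2 - (1 + η * β) * (1 + γ) * B + (1 + η * β) = 0)
    (hAB : A > B)
    (I J : ℝ)
    (hI : I = (γ * A + A - 1) / ((A - B) * (γ * A - 1)))
    (hJ : J = (γ * B + B - 1) / ((A - B) * (1 - γ * B))) :
    I * A + J * B = (1 + η * β + η * β * γ) / (η * β * γ) :=
  stmt_7_general γ η β hγ0 hη hβ A B hArt hBrt hAB I J hI hJ
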